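/- arXiv:1909.12565 — 5 statements merged into one kernel-verified Lean document; each statement's English description precedes it below -/
import Mathlib

section
/- Let T be a real 3×3 matrix (the correlation matrix of a two-qubit state) and let U = Tᵀ T, a real symmetric positive-semidefinite matrix with eigenvalues η₁ ≥ η₂ ≥ η₃ ≥ 0. Suppose the state violates the Bell-CHSH inequality, i.e. 1 ≤ η₁ + η₂ ≤ 2 (equivalently, some pair of eigenvalues of U at distinct indices sums to at least 1, and every such pair sums to at most 2). Let μ be a real number with 0 ≤ μ ≤ 1/√2. Then the eigenvalues η′ᵢ = μ⁴ηᵢ of the matrix (μ²T)ᵀ(μ²T) associated to the output of the Buzek–Hillery state-dependent local cloner satisfy μ⁴ ≤ η′₁ + η′₂ ≤ 2μ⁴, and in particular 1/4 ≤ η′₁ + η′₂ ≤ 1/2 when μ = 1/√2; hence η′₁ + η′₂ ≤ 1/2 < 1, so the output state does not violate the Bell-CHSH inequality. (Impossibility of broadcasting Bell non-locality by the local state-dependent cloner.) -/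
open Matrix

theorem smul_mem_spectrum_smul {𝕜 A : Type*} [Field 𝕜] [Ring A] [Algebra 𝕜 A] [Nontrivial A]
    (c : 𝕜) {a : A} {η : 𝕜} (h : η ∈ spectrum 𝕜 a) : c * η ∈ spectrum 𝕜 (c • a) := by
  rcases eq_or_ne c 0 with rfl | hc
  · simp
  · exact spectrum.smul_mem_smul_iff (r := Units.mk0 c hc) |>.mpr h

theorem Matrix.transpose_smul_mul_smul {m n R : Type*} [Fintype m] [CommSemiring R]
    (c : R) (T : Matrix m n R) : (c • T)ᵀ * (c • T) = c ^ 2 • (Tᵀ * T) := by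
  rw [transpose_smul, Matrix.smul_mul, Matrix.mul_smul, smul_smul, sq]

theorem one_div_sqrt_two_pow_four : (1 / √2 : ℝ) ^ 4 = 1 / 4 := by
  rw [div_pow, one_pow, show (4 : ℕ) = 2 * 2 from rfl, pow_mul, Real.sq_sqrt zero_le_two]
  norm_num

theorem pow_four_le_of_le_one_div_sqrt_two {μ : ℝ} (hμ0 : 0 ≤ μ) (hμ1 : μ ≤ 1 / √2) : μ ^ 4 ≤ 1 / 4 :=
  one_div_sqrt_two_pow_four ▸ pow_le_pow_left₀ hμ0 hμ1 4

theorem broadcasting_bell_nonlocality_local_cloner_impossible_general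
    (T : Matrix (Fin 3) (Fin 3) ℝ) (η₁ η₂ η₃ : ℝ)
    (hmem₁ : η₁ ∈ spectrum ℝ (Tᵀ * T))
    (hmem₂ : η₂ ∈ spectrum ℝ (Tᵀ * T))
    (hmem₃ : η₃ ∈ spectrum ℝ (Tᵀ * T))
    (hviol_lo : 1 ≤ η₁ + η₂) (hviol_hi : η₁ + η₂ ≤ 2)
    (μ : ℝ) (hμ0 : 0 ≤ μ) (hμ1 : μ ≤ 1 / Real.sqrt 2) :
    (μ ^ 4 * η₁ ∈ spectrum ℝ ((μ ^ 2 • T)ᵀ * (μ ^ 2 • T)) ∧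
      μ ^ 4 * η₂ ∈ spectrum ℝ ((μ ^ 2 • T)ᵀ * (μ ^ 2 • T)) ∧
      μ ^ 4 * η₃ ∈ spectrum ℝ ((μ ^ 2 • T)ᵀ * (μ ^ 2 • T))) ∧
    (μ ^ 4 ≤ μ ^ 4 * η₁ + μ ^ 4 * η₂ ∧ μ ^ 4 * η₁ + μ ^ 4 * η₂ ≤ 2 * μ ^ 4) ∧
    (μ = 1 / Real.sqrt 2 →
      1 / 4 ≤ μ ^ 4 * η₁ + μ ^ 4 * η₂ ∧ μ ^ 4 * η₁ + μ ^ 4 * η₂ ≤ 1 / 2) ∧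
    (μ ^ 4 * η₁ + μ ^ 4 * η₂ ≤ 1 / 2 ∧ μ ^ 4 * η₁ + μ ^ 4 * η₂ < 1) := by
  have hgram : (μ ^ 2 • T)ᵀ * (μ ^ 2 • T) = μ ^ 4 • (Tᵀ * T) := by
    rw [transpose_smul_mul_smul, ← pow_mul]
  have hμ4 : μ ^ 4 ≤ 1 / 4 := pow_four_le_of_le_one_div_sqrt_two hμ0 hμ1
  have hsum : μ ^ 4 * η₁ + μ ^ 4 * η₂ = μ ^ 4 * (η₁ + η₂) := by ring
  have hsum_lo : μ ^ 4 ≤ μ ^ 4 * (η₁ + η₂) := le_mul_of_one_le_right (by positivity) hviol_lo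
  have hsum_hi : μ ^ 4 * (η₁ + η₂) ≤ 2 * μ ^ 4 :=
    (mul_le_mul_of_nonneg_left hviol_hi (by positivity)).trans_eq (mul_comm _ _)
  rw [hgram, hsum]
  refine ⟨⟨smul_mem_spectrum_smul _ hmem₁, smul_mem_spectrum_smul _ hmem₂,
    smul_mem_spectrum_smul _ hmem₃⟩, ⟨hsum_lo, hsum_hi⟩, fun hμ => ?_, by linarith, by linarith⟩
  have hμ4_eq : μ ^ 4 = 1 / 4 := hμ ▸ one_div_sqrt_two_pow_four
  constructor <;> linarith

/-- Impossibility of broadcasting Bell non-locality by the Buzek–Hillery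
state-dependent *local* cloner.  `T` is the correlation matrix of a two-qubit
state, `η₁ ≥ η₂ ≥ η₃ ≥ 0` are the eigenvalues of the Gram matrix `Tᵀ * T`,
and the Bell-CHSH violation of the input reads `1 ≤ η₁ + η₂ ≤ 2`.  The local
cloner scales `T` to `μ² • T`, hence the eigenvalues to `μ⁴ • ηᵢ`, and the
output never violates Bell-CHSH. -/
theorem broadcasting_bell_nonlocality_local_cloner_impossible
    (T : Matrix (Fin 3) (Fin 3) ℝ) (η₁ η₂ η₃ : ℝ)
    (hmem₁ : η₁ ∈ spectrum ℝ (Tᵀ * T))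
    (hmem₂ : η₂ ∈ spectrum ℝ (Tᵀ * T))
    (hmem₃ : η₃ ∈ spectrum ℝ (Tᵀ * T))
    (h12 : η₂ ≤ η₁) (h23 : η₃ ≤ η₂) (h3 : 0 ≤ η₃)
    (hviol_lo : 1 ≤ η₁ + η₂) (hviol_hi : η₁ + η₂ ≤ 2)
    (μ : ℝ) (hμ0 : 0 ≤ μ) (hμ1 : μ ≤ 1 / Real.sqrt 2) :
    (μ ^ 4 * η₁ ∈ spectrum ℝ ((μ ^ 2 • T)ᵀ * (μ ^ 2 • T)) ∧
      μ ^ 4 * η₂ ∈ spectrum ℝ ((μ ^ 2 • T)ᵀ * (μ ^ 2 • T)) ∧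
      μ ^ 4 * η₃ ∈ spectrum ℝ ((μ ^ 2 • T)ᵀ * (μ ^ 2 • T))) ∧
    (μ ^ 4 ≤ μ ^ 4 * η₁ + μ ^ 4 * η₂ ∧ μ ^ 4 * η₁ + μ ^ 4 * η₂ ≤ 2 * μ ^ 4) ∧
    (μ = 1 / Real.sqrt 2 →
      1 / 4 ≤ μ ^ 4 * η₁ + μ ^ 4 * η₂ ∧ μ ^ 4 * η₁ + μ ^ 4 * η₂ ≤ 1 / 2) ∧
    (μ ^ 4 * η₁ + μ ^ 4 * η₂ ≤ 1 / 2 ∧ μ ^ 4 * η₁ + μ ^ 4 * η₂ < 1) :=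
  broadcasting_bell_nonlocality_local_cloner_impossible_general T η₁ η₂ η₃ hmem₁ hmem₂ hmem₃
    hviol_lo hviol_hi μ hμ0 hμ1
end

section
/- Let T be a real 3×3 matrix (the correlation matrix of a two-qubit state) and define F₃(T) = √(trace(TᵀT)), the three-setting CJWR steering functional (the square root of the sum of all three eigenvalues of TᵀT). Suppose the state is 3-steerable, i.e. 1 ≤ F₃(T) ≤ √3, equivalently 1 ≤ trace(TᵀT) ≤ 3. Let μ be a real number with 0 ≤ μ ≤ 1/√2. Then the output of the Buzek–Hillery state-dependent local cloner, with correlation matrix μ²T, satisfies μ⁴ ≤ trace((μ²T)ᵀ(μ²T)) ≤ 3μ⁴, hence 1/4 ≤ trace((μ²T)ᵀ(μ²T)) ≤ 3/4 when μ = 1/√2, and in all cases F₃(μ²T) = √(trace((μ²T)ᵀ(μ²T))) ≤ √3/2 < 1; the output state is 3-unsteerable. (Impossibility of broadcasting 3-steerability by the local state-dependent cloner.) -/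
/-! Scaling `T` by `μ²` scales `trace (Tᵀ T)` by `μ⁴ ≤ 1/4`, so the steering bound
`trace (Tᵀ T) ≤ 3` turns into `trace ≤ 3/4 < 1` for the cloned state. -/

open Matrix

theorem Matrix.trace_transpose_smul_mul_smul {m n R : Type*} [Fintype m] [Fintype n]
    [CommSemiring R] (c : R) (A : Matrix m n R) :
    ((c • A)ᵀ * (c • A)).trace = c ^ 2 * (Aᵀ * A).trace := by
  rw [transpose_smul, Matrix.smul_mul, Matrix.mul_smul, smul_smul, trace_smul, smul_eq_mul, sq]

theorem one_div_sqrt_two_sq : (1 / Real.sqrt 2) ^ 2 = 1 / 2 := by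
  rw [div_pow, one_pow, Real.sq_sqrt zero_le_two]

theorem pow_four_le_quarter_of_le_one_div_sqrt_two {μ : ℝ} (hμ0 : 0 ≤ μ)
    (hμ1 : μ ≤ 1 / Real.sqrt 2) : μ ^ 4 ≤ 1 / 4 := by
  have hsq : μ ^ 2 ≤ 1 / 2 := one_div_sqrt_two_sq ▸ pow_le_pow_left₀ hμ0 hμ1 2
  calc μ ^ 4 = (μ ^ 2) ^ 2 := by ring
    _ ≤ (1 / 2) ^ 2 := pow_le_pow_left₀ (sq_nonneg μ) hsq 2
    _ = 1 / 4 := by norm_num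

theorem sqrt_three_div_two_lt_one : Real.sqrt 3 / 2 < 1 := by
  rw [div_lt_one two_pos, Real.sqrt_lt' two_pos]
  norm_num

/-- Impossibility of broadcasting 3-steerability by the Buzek–Hillery
state-dependent *local* cloner.  `F₃(T) = √(trace (Tᵀ * T))` is the
three-setting CJWR steering functional; a 3-steerable input satisfies
`1 ≤ trace (Tᵀ * T) ≤ 3`.  The local cloner scales `T` to `μ² • T` and the
output is 3-unsteerable. -/
theorem broadcasting_3steerability_local_cloner_impossible
    (T : Matrix (Fin 3) (Fin 3) ℝ)
    (hsteer_lo : 1 ≤ (Tᵀ * T).trace) (hsteer_hi : (Tᵀ * T).trace ≤ 3)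
    (μ : ℝ) (hμ0 : 0 ≤ μ) (hμ1 : μ ≤ 1 / Real.sqrt 2) :
    (μ ^ 4 ≤ ((μ ^ 2 • T)ᵀ * (μ ^ 2 • T)).trace ∧
      ((μ ^ 2 • T)ᵀ * (μ ^ 2 • T)).trace ≤ 3 * μ ^ 4) ∧
    (μ = 1 / Real.sqrt 2 →
      1 / 4 ≤ ((μ ^ 2 • T)ᵀ * (μ ^ 2 • T)).trace ∧
      ((μ ^ 2 • T)ᵀ * (μ ^ 2 • T)).trace ≤ 3 / 4) ∧
    (Real.sqrt (((μ ^ 2 • T)ᵀ * (μ ^ 2 • T)).trace) ≤ Real.sqrt 3 / 2 ∧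
      Real.sqrt 3 / 2 < 1) := by
  have hscale : ((μ ^ 2 • T)ᵀ * (μ ^ 2 • T)).trace = μ ^ 4 * (Tᵀ * T).trace := by
    rw [trace_transpose_smul_mul_smul, ← pow_mul]
  have hμ4 : μ ^ 4 ≤ 1 / 4 := pow_four_le_quarter_of_le_one_div_sqrt_two hμ0 hμ1
  have hlo : μ ^ 4 ≤ μ ^ 4 * (Tᵀ * T).trace := le_mul_of_one_le_right (by positivity) hsteer_lo
  have hhi : μ ^ 4 * (Tᵀ * T).trace ≤ 3 * μ ^ 4 := by
    rw [mul_comm 3]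
    exact mul_le_mul_of_nonneg_left hsteer_hi (by positivity)
  rw [hscale]
  refine ⟨⟨hlo, hhi⟩, fun hμ ↦ ?_, ?_, sqrt_three_div_two_lt_one⟩
  · have hquarter : μ ^ 4 = 1 / 4 := by
      rw [hμ, show 4 = 2 * 2 from rfl, pow_mul, one_div_sqrt_two_sq]
      norm_num
    constructor <;> linarith
  · calc Real.sqrt (μ ^ 4 * (Tᵀ * T).trace) ≤ Real.sqrt (3 / 4) :=
          Real.sqrt_le_sqrt (by linarith)
      _ = Real.sqrt 3 / 2 := by
          rw [Real.sqrt_div' _ (by norm_num : (0 : ℝ) ≤ 4),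
            show (4 : ℝ) = 2 ^ 2 by norm_num, Real.sqrt_sq zero_le_two]
end

section
/- Let p be a real number with 0 ≤ p ≤ 1 (the parameter of a Werner state, whose Bloch representation is {0, 0, diag(p, −p, p)}), and let μ be a real number with 0 ≤ μ ≤ 1/√2. After applying the Buzek–Hillery state-dependent local cloner the output state has Bloch representation {0, 0, μ²·diag(p, −p, p)}, and its correlation matrix Gram matrix (μ²T)ᵀ(μ²T) has largest eigenvalue η_max = μ⁴p². This output satisfies the unsteerability criterion |x|² + 2√(η_max) ≤ 1, i.e. 2μ²p ≤ 1 holds for every such p and μ; hence every steerable Werner state becomes unsteerable (admits a local hidden state model under any number of measurement settings) after local state-dependent cloning. -/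
open Matrix

/-
The cloner shrinks the Werner correlation matrix `T = diag (p, -p, p)` to `μ² T`. Since
`Tᵀ T = p² • 1`, the Gram matrix of the output is the scalar matrix `μ⁴ p² • 1`, whose only
eigenvalue is `η_max = μ⁴ p²`. The Bowles et al. quantity is then `2 √η_max = 2 μ² p`, which is
at most `1` because `μ² ≤ 1/2` and `p ≤ 1`.
-/

theorem Matrix.diagonal_transpose_mul_self_of_sq_eq {n R : Type*} [Fintype n] [DecidableEq n]
    [CommSemiring R] (d : n → R) (c : R) (hd : ∀ i, d i ^ 2 = c) :
    (diagonal d)ᵀ * diagonal d = algebraMap R (Matrix n n R) c := by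
  rw [diagonal_transpose, diagonal_mul_diagonal, algebraMap_eq_diagonal]
  congr 1
  funext i
  simp [← hd i, sq]

theorem cloned_werner_gram_eq (μ p : ℝ) :
    (μ ^ 2 • diagonal ![p, -p, p])ᵀ * (μ ^ 2 • diagonal ![p, -p, p]) =
      algebraMap ℝ (Matrix (Fin 3) (Fin 3) ℝ) (μ ^ 4 * p ^ 2) := by
  rw [← diagonal_smul]
  refine diagonal_transpose_mul_self_of_sq_eq _ _ fun i => ?_
  fin_cases i <;> simp <;> ring

theorem sq_le_half_of_le_inv_sqrt_two {μ : ℝ} (hμ0 : 0 ≤ μ) (hμ1 : μ ≤ 1 / Real.sqrt 2) :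
    μ ^ 2 ≤ 1 / 2 := by
  rwa [one_div, ← Real.sqrt_inv, Real.le_sqrt hμ0 (by norm_num), ← one_div] at hμ1

/-- A steerable Werner state (correlation matrix `diag (p, -p, p)`, vanishing
local Bloch vectors) becomes unsteerable after the Buzek–Hillery
state-dependent local cloner: the output has correlation matrix
`μ² • diag (p, -p, p)`, the largest eigenvalue of its Gram matrix is
`μ⁴ p²`, and the Bowles et al. unsteerability criterion
`|x|² + 2 √η_max ≤ 1`, i.e. `2 μ² p ≤ 1`, is satisfied. -/
theorem werner_unsteerable_after_local_cloning
    (p : ℝ) (hp0 : 0 ≤ p) (hp1 : p ≤ 1)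
    (μ : ℝ) (hμ0 : 0 ≤ μ) (hμ1 : μ ≤ 1 / Real.sqrt 2) :
    IsGreatest
      (spectrum ℝ ((μ ^ 2 • Matrix.diagonal ![p, -p, p])ᵀ *
        (μ ^ 2 • Matrix.diagonal ![p, -p, p])))
      (μ ^ 4 * p ^ 2) ∧
    ‖(0 : EuclideanSpace ℝ (Fin 3))‖ ^ 2 + 2 * Real.sqrt (μ ^ 4 * p ^ 2) ≤ 1 ∧
    2 * μ ^ 2 * p ≤ 1 := by
  have hμ2 := sq_le_half_of_le_inv_sqrt_two hμ0 hμ1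
  have hcriterion : 2 * μ ^ 2 * p ≤ 1 := by nlinarith
  have hsqrt : Real.sqrt (μ ^ 4 * p ^ 2) = μ ^ 2 * p := by
    rw [show μ ^ 4 * p ^ 2 = (μ ^ 2 * p) ^ 2 by ring, Real.sqrt_sq (by positivity)]
  refine ⟨?_, ?_, hcriterion⟩
  · rw [cloned_werner_gram_eq, spectrum.scalar_eq]
    exact isGreatest_singleton
  · rw [norm_zero, hsqrt]
    linarith
end

section
/- Let c₁, c₂, c₃ be real numbers with −1 ≤ cᵢ ≤ 1 for i = 1, 2, 3 (the parameters of a Bell-diagonal state, whose Bloch representation is {0, 0, diag(c₁, c₂, c₃)}), and let μ be a real number with 0 ≤ μ ≤ 1/√2. After applying the Buzek–Hillery state-dependent local cloner the output state has Bloch representation {0, 0, μ²·diag(c₁, c₂, c₃)}, and the largest eigenvalue of its correlation Gram matrix is η_max = μ⁴·(max{|c₁|, |c₂|, |c₃|})². This output satisfies the unsteerability criterion |x|² + 2√(η_max) ≤ 1, i.e. 2μ²·max{|c₁|, |c₂|, |c₃|} ≤ 1 holds for all such cᵢ and μ; hence every steerable Bell-diagonal state becomes unsteerable (admits a local hidden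 state model under any number of measurement settings) after local state-dependent cloning. -/
/-! After the cloner the correlation matrix `μ² • diag c` has Gram matrix `diag (μ² cᵢ)²`, whose
spectrum is its diagonal, so `η_max = (μ² max |cᵢ|)²` and `2 √η_max = 2 μ² max |cᵢ|`. The Schwarz
bound `μ² ≤ 1/2` together with `|cᵢ| ≤ 1` makes this at most `1`. -/

open Matrix Set

theorem Matrix.transpose_smul_diagonal_mul_smul_diagonal {ι R : Type*} [Fintype ι]
    [DecidableEq ι] [CommRing R] (a : R) (d : ι → R) :
    (a • diagonal d)ᵀ * (a • diagonal d) = diagonal fun i => (a * d i) ^ 2 := by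
  rw [transpose_smul, diagonal_transpose, smul_mul_smul_comm, diagonal_mul_diagonal,
    ← diagonal_smul]
  congr 1
  funext i
  simp only [Pi.smul_apply, smul_eq_mul]
  ring

theorem isGreatest_spectrum_gram_smul_diagonal {ι : Type*} [Fintype ι] [DecidableEq ι]
    {a M : ℝ} (ha : 0 ≤ a) {d : ι → ℝ} (hM : IsGreatest (range fun i => |d i|) M) :
    IsGreatest (spectrum ℝ ((a • diagonal d)ᵀ * (a • diagonal d))) ((a * M) ^ 2) := by
  have hrange :
      (range fun i => (a * d i) ^ 2) = (fun x => (a * x) ^ 2) '' range fun i => |d i| := by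
    rw [← range_comp]
    congr 1
    funext i
    simp only [Function.comp_apply, mul_pow, sq_abs]
  have hmono : MonotoneOn (fun x => (a * x) ^ 2) (Ici 0) := fun x hx _ _ hxy =>
    pow_le_pow_left₀ (mul_nonneg ha hx) (mul_le_mul_of_nonneg_left hxy ha) 2
  rw [transpose_smul_diagonal_mul_smul_diagonal, spectrum_diagonal, hrange]
  exact (hmono.mono (range_subset_iff.2 fun i => abs_nonneg (d i))).map_isGreatest hM

theorem isGreatest_range_abs_vecCons_three (c₁ c₂ c₃ : ℝ) :
    IsGreatest (range fun i => |![c₁, c₂, c₃] i|) (max |c₁| (max |c₂| |c₃|)) := by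
  have hrange : (range fun i => |![c₁, c₂, c₃] i|) = {|c₁|, |c₂|, |c₃|} := by
    ext x
    simp [Fin.exists_fin_succ, eq_comm]
  rw [hrange]
  exact isGreatest_pair.insert _

theorem two_mul_sq_le_one_of_le_inv_sqrt_two {μ : ℝ} (hμ0 : 0 ≤ μ)
    (hμ1 : μ ≤ 1 / Real.sqrt 2) : 2 * μ ^ 2 ≤ 1 := by
  have hsq : μ ^ 2 ≤ (1 / Real.sqrt 2) ^ 2 := pow_le_pow_left₀ hμ0 hμ1 2
  rw [div_pow, one_pow, Real.sq_sqrt zero_le_two] at hsq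
  linarith

/-- A steerable Bell-diagonal state (correlation matrix `diag (c₁, c₂, c₃)`,
vanishing local Bloch vectors) becomes unsteerable after the Buzek–Hillery
state-dependent local cloner: the output has correlation matrix
`μ² • diag (c₁, c₂, c₃)`, the largest eigenvalue of its Gram matrix is
`μ⁴ (max {|c₁|, |c₂|, |c₃|})²`, and the Bowles et al. unsteerability
criterion `|x|² + 2 √η_max ≤ 1`, i.e. `2 μ² max {|c₁|, |c₂|, |c₃|} ≤ 1`,
is satisfied. -/
theorem bell_diagonal_unsteerable_after_local_cloning
    (c₁ c₂ c₃ : ℝ)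
    (hc₁ : -1 ≤ c₁ ∧ c₁ ≤ 1) (hc₂ : -1 ≤ c₂ ∧ c₂ ≤ 1) (hc₃ : -1 ≤ c₃ ∧ c₃ ≤ 1)
    (μ : ℝ) (hμ0 : 0 ≤ μ) (hμ1 : μ ≤ 1 / Real.sqrt 2) :
    IsGreatest
      (spectrum ℝ ((μ ^ 2 • Matrix.diagonal ![c₁, c₂, c₃])ᵀ *
        (μ ^ 2 • Matrix.diagonal ![c₁, c₂, c₃])))
      (μ ^ 4 * (max |c₁| (max |c₂| |c₃|)) ^ 2) ∧
    ‖(0 : EuclideanSpace ℝ (Fin 3))‖ ^ 2 +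
        2 * Real.sqrt (μ ^ 4 * (max |c₁| (max |c₂| |c₃|)) ^ 2) ≤ 1 ∧
    2 * μ ^ 2 * max |c₁| (max |c₂| |c₃|) ≤ 1 := by
  set m := max |c₁| (max |c₂| |c₃|)
  have hm0 : 0 ≤ m := (abs_nonneg c₁).trans (le_max_left _ _)
  have hm1 : m ≤ 1 := max_le (abs_le.2 hc₁) (max_le (abs_le.2 hc₂) (abs_le.2 hc₃))
  have hcriterion : 2 * μ ^ 2 * m ≤ 1 :=
    calc 2 * μ ^ 2 * m ≤ 2 * μ ^ 2 * 1 := by gcongr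
      _ ≤ 1 := by simpa using two_mul_sq_le_one_of_le_inv_sqrt_two hμ0 hμ1
  have hη : μ ^ 4 * m ^ 2 = (μ ^ 2 * m) ^ 2 := by ring
  refine ⟨hη ▸ isGreatest_spectrum_gram_smul_diagonal (sq_nonneg μ)
    (isGreatest_range_abs_vecCons_three c₁ c₂ c₃), ?_, hcriterion⟩
  rw [hη, Real.sqrt_sq (by positivity), norm_zero]
  linarith
end

section
/- Let T be a real 3×3 matrix with symmetric positive-semidefinite Gram matrix U = TᵀT having eigenvalues η₁ ≥ η₂ ≥ η₃ ≥ 0, and suppose η₁ + η₂ ≤ 2 (equivalently, every pair of eigenvalues of U at distinct indices sums to at most 2). Then for every real μ with 0 ≤ μ ≤ 1/√2, the Horodecki Bell-CHSH quantity of the state with correlation matrix μ²T satisfies S = 2√(μ⁴η₁ + μ⁴η₂) ≤ 2·√(1/2) = √2 < 2; that is, the maximal Bell-CHSH expectation value of the output of the Buzek–Hillery state-dependent local cloner never exceeds the local bound 2. -/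
open Matrix

/-! The cloner multiplies every eigenvalue of `Tᵀ T` by `μ⁴ ≤ 1/4`, so the Horodecki quantity
`M = η₁ + η₂ ≤ 2` of the input becomes at most `1/2` at the output, and `S = 2√M ≤ √2 < 2`. -/

lemma pow_four_le_quarter_of_le_inv_sqrt_two {μ : ℝ} (hμ0 : 0 ≤ μ) (hμ : μ ≤ 1 / √2) :
    μ ^ 4 ≤ 1 / 4 := by
  have hsq : μ ^ 2 ≤ 1 / 2 :=
    calc μ ^ 2 ≤ (1 / √2) ^ 2 := pow_le_pow_left₀ hμ0 hμ 2
      _ = 1 / 2 := by rw [div_pow, Real.sq_sqrt zero_le_two, one_pow]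
  calc μ ^ 4 = (μ ^ 2) ^ 2 := by ring
    _ ≤ (1 / 2) ^ 2 := pow_le_pow_left₀ (sq_nonneg μ) hsq 2
    _ = 1 / 4 := by norm_num

lemma two_mul_sqrt_half : 2 * √(1 / 2) = √2 := by
  calc 2 * √(1 / 2) = √(2 ^ 2) * √(1 / 2) := by rw [Real.sqrt_sq zero_le_two]
    _ = √(2 ^ 2 * (1 / 2)) := (Real.sqrt_mul (sq_nonneg 2) _).symm
    _ = √2 := by norm_num

lemma sqrt_two_lt_two : √2 < 2 := by
  rw [Real.sqrt_lt' two_pos]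
  norm_num

theorem chsh_value_after_local_cloning_below_local_bound_general
    (η₁ η₂ : ℝ)
    (hsum : η₁ + η₂ ≤ 2) :
    ∀ μ : ℝ, 0 ≤ μ → μ ≤ 1 / Real.sqrt 2 →
      2 * Real.sqrt (μ ^ 4 * η₁ + μ ^ 4 * η₂) ≤ 2 * Real.sqrt (1 / 2) ∧
      2 * Real.sqrt (1 / 2) = Real.sqrt 2 ∧
      Real.sqrt 2 < 2 := by
  intro μ hμ0 hμ
  have hM : μ ^ 4 * η₁ + μ ^ 4 * η₂ ≤ 1 / 2 :=
    calc μ ^ 4 * η₁ + μ ^ 4 * η₂ = μ ^ 4 * (η₁ + η₂) := by ring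
      _ ≤ μ ^ 4 * 2 := mul_le_mul_of_nonneg_left hsum (by positivity)
      _ ≤ 1 / 4 * 2 := by gcongr; exact pow_four_le_quarter_of_le_inv_sqrt_two hμ0 hμ
      _ = 1 / 2 := by norm_num
  exact ⟨by gcongr, two_mul_sqrt_half, sqrt_two_lt_two⟩

/-- The Horodecki Bell-CHSH quantity of the output of the Buzek–Hillery
state-dependent local cloner never exceeds the local bound `2`: if the input
Gram matrix `Tᵀ * T` has eigenvalues `η₁ ≥ η₂ ≥ η₃ ≥ 0` with `η₁ + η₂ ≤ 2`,
then for every `0 ≤ μ ≤ 1/√2` the output (with correlation matrix `μ² • T`)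
satisfies `S = 2 √(μ⁴ η₁ + μ⁴ η₂) ≤ 2 √(1/2) = √2 < 2`. -/
theorem chsh_value_after_local_cloning_below_local_bound
    (T : Matrix (Fin 3) (Fin 3) ℝ) (η₁ η₂ η₃ : ℝ)
    (hmem₁ : η₁ ∈ spectrum ℝ (Tᵀ * T))
    (hmem₂ : η₂ ∈ spectrum ℝ (Tᵀ * T))
    (hmem₃ : η₃ ∈ spectrum ℝ (Tᵀ * T))
    (h12 : η₂ ≤ η₁) (h23 : η₃ ≤ η₂) (h3 : 0 ≤ η₃)
    (hsum : η₁ + η₂ ≤ 2) :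
    ∀ μ : ℝ, 0 ≤ μ → μ ≤ 1 / Real.sqrt 2 →
      2 * Real.sqrt (μ ^ 4 * η₁ + μ ^ 4 * η₂) ≤ 2 * Real.sqrt (1 / 2) ∧
      2 * Real.sqrt (1 / 2) = Real.sqrt 2 ∧
      Real.sqrt 2 < 2 :=
  chsh_value_after_local_cloning_below_local_bound_general η₁ η₂ hsum
end
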